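/- Let q : ℕ → ℝ be a non-increasing sequence of non-negative numbers with q 0 > 0, and Q n = ∑_{k=0}^{n-1} q k. If 2^k · q(2^k)/Q(2^k) → 0 as k → ∞, then (1/Q(2^n)) · ∑_{k=0}^{n} Q(2^k) → ∞ as n → ∞. -/

import Mathlib

open Filter Topology Finset

/-!
Write `a k = Q (2 ^ k)`. Since `q` is non-increasing, the block `2 ^ k ≤ j < 2 ^ (k + 1)` adds
at most `2 ^ k * q (2 ^ k)` to `Q`, so `1 ≤ a (k + 1) / a k ≤ 1 + 2 ^ k * q (2 ^ k) / a k → 1`.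
For a positive sequence with consecutive ratios tending to `1`, each of the last `m` terms
`a (n - j)` is eventually close to `a n`, so `(∑ k ≤ n, a k) / a n` is eventually almost `m`.
-/

section RatioTendstoOne

variable {a : ℕ → ℝ}

theorem tendsto_add_div_of_tendsto_succ_div (ha : ∀ n, 0 < a n)
    (h : Tendsto (fun n => a (n + 1) / a n) atTop (𝓝 1)) (j : ℕ) :
    Tendsto (fun n => a (n + j) / a n) atTop (𝓝 1) := by
  induction j with
  | zero => simp [div_self (ha _).ne']
  | succ j ih =>
    have hstep : Tendsto (fun n => a (n + j + 1) / a (n + j)) atTop (𝓝 1) :=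
      h.comp (tendsto_add_atTop_nat j)
    have hprod := hstep.mul ih
    rw [one_mul] at hprod
    refine hprod.congr fun n => ?_
    rw [← add_assoc, div_mul_div_cancel₀ (ha _).ne']

theorem tendsto_sub_div_of_tendsto_succ_div (ha : ∀ n, 0 < a n)
    (h : Tendsto (fun n => a (n + 1) / a n) atTop (𝓝 1)) (j : ℕ) :
    Tendsto (fun n => a (n - j) / a n) atTop (𝓝 1) := by
  have hinv := ((tendsto_add_div_of_tendsto_succ_div ha h j).inv₀ one_ne_zero).comp
    (tendsto_sub_atTop_nat j)
  rw [inv_one] at hinv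
  refine hinv.congr' ?_
  filter_upwards [eventually_ge_atTop j] with n hn
  simp [Nat.sub_add_cancel hn]

theorem tendsto_sum_range_succ_div_atTop (ha : ∀ n, 0 < a n)
    (h : Tendsto (fun n => a (n + 1) / a n) atTop (𝓝 1)) :
    Tendsto (fun n => (∑ k ∈ range (n + 1), a k) / a n) atTop atTop := by
  refine tendsto_atTop.2 fun C => ?_
  obtain ⟨m, hm⟩ := exists_nat_gt C
  have hlast : Tendsto (fun n => ∑ j ∈ range m, a (n - j) / a n) atTop (𝓝 m) := by
    simpa using tendsto_finsetSum (range m) fun j _ => tendsto_sub_div_of_tendsto_succ_div ha h j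
  filter_upwards [hlast.eventually (eventually_gt_nhds hm), eventually_ge_atTop m]
    with n hC hmn
  have hreflect : ∑ j ∈ range (n + 1), a (n - j) = ∑ k ∈ range (n + 1), a k := by
    simpa using sum_range_reflect a (n + 1)
  calc C ≤ ∑ j ∈ range m, a (n - j) / a n := hC.le
    _ = (∑ j ∈ range m, a (n - j)) / a n := (sum_div _ _ _).symm
    _ ≤ (∑ j ∈ range (n + 1), a (n - j)) / a n := by
      refine div_le_div_of_nonneg_right ?_ (ha n).le
      exact sum_le_sum_of_subset_of_nonneg (range_subset_range.2 (by omega))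
        fun j _ _ => (ha _).le
    _ = (∑ k ∈ range (n + 1), a k) / a n := by rw [hreflect]

end RatioTendstoOne

section PartialSums

variable {q : ℕ → ℝ}

theorem sum_range_pos_of_nonneg (hq : ∀ k, 0 ≤ q k) (hq0 : 0 < q 0) {n : ℕ} (hn : 0 < n) :
    0 < ∑ k ∈ range n, q k :=
  hq0.trans_le (single_le_sum (fun k _ => hq k) (mem_range.2 hn))

theorem sum_range_le_sum_range_of_nonneg (hq : ∀ k, 0 ≤ q k) {m n : ℕ} (hmn : m ≤ n) :
    ∑ k ∈ range m, q k ≤ ∑ k ∈ range n, q k :=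
  sum_le_sum_of_subset_of_nonneg (range_subset_range.2 hmn) fun k _ _ => hq k

theorem sum_range_two_mul_le_of_antitone (hq : Antitone q) (n : ℕ) :
    ∑ k ∈ range (2 * n), q k ≤ ∑ k ∈ range n, q k + n * q n := by
  rw [two_mul, sum_range_add]
  gcongr
  calc ∑ k ∈ range n, q (n + k) ≤ ∑ _k ∈ range n, q n :=
        sum_le_sum fun k _ => hq (Nat.le_add_right n k)
    _ = n * q n := by simp

theorem tendsto_sum_range_two_pow_succ_div (hq : Antitone q) (hq_nonneg : ∀ k, 0 ≤ q k)
    (hq0 : 0 < q 0)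
    (h : Tendsto (fun k => 2 ^ k * q (2 ^ k) / ∑ j ∈ range (2 ^ k), q j) atTop (𝓝 0)) :
    Tendsto (fun k => (∑ j ∈ range (2 ^ (k + 1)), q j) / ∑ j ∈ range (2 ^ k), q j)
      atTop (𝓝 1) := by
  have hpos (k : ℕ) : 0 < ∑ j ∈ range (2 ^ k), q j :=
    sum_range_pos_of_nonneg hq_nonneg hq0 (by positivity)
  refine tendsto_of_tendsto_of_tendsto_of_le_of_le tendsto_const_nhds
    (by simpa using tendsto_const_nhds.add h) (fun k => ?_) (fun k => ?_)
  · exact (one_le_div (hpos k)).2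
      (sum_range_le_sum_range_of_nonneg hq_nonneg (Nat.pow_le_pow_right two_pos k.le_succ))
  · rw [one_add_div (hpos k).ne']
    refine div_le_div_of_nonneg_right ?_ (hpos k).le
    simpa [pow_succ, mul_comm] using sum_range_two_mul_le_of_antitone hq (2 ^ k)

end PartialSums

theorem stmt_5 (q : ℕ → ℝ) (hq : Antitone q) (hq0 : ∀ k, 0 ≤ q k) (hq0' : 0 < q 0)
    (Q : ℕ → ℝ) (hQ : ∀ n, Q n = ∑ k ∈ Finset.range n, q k)
    (h0 : Tendsto (fun k => 2 ^ k * q (2 ^ k) / Q (2 ^ k)) atTop (nhds 0)) :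
    Tendsto (fun n => (1 / Q (2 ^ n)) * ∑ k ∈ Finset.range (n + 1), Q (2 ^ k))
      atTop atTop := by
  obtain rfl : Q = fun n => ∑ k ∈ range n, q k := funext hQ
  have hpos (k : ℕ) : 0 < ∑ j ∈ range (2 ^ k), q j :=
    sum_range_pos_of_nonneg hq0 hq0' (by positivity)
  simpa only [one_div_mul_eq_div] using
    tendsto_sum_range_succ_div_atTop hpos (tendsto_sum_range_two_pow_succ_div hq hq0 hq0' h0)
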